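/- arXiv:2408.17342 — 2 statements merged into one kernel-verified Lean document; each statement's English description precedes it below -/
import Mathlib

section
/- Let $\mu$ be a finite signed vector-valued Borel measure on $[0,T]$ with values in $\mathbb{R}^m$ whose range is contained in a closed cone $\mathcal{K}$, and let $\mathcal{V}_c(\mu)$ denote the set of nonnegative finite Borel measures $\nu$ on $[0,T]$ such that $\nu^c=|\mu^c|$ (equality of continuous parts with the total-variation measure of the continuous part of $\mu$) and there exists a sequence $(\mu_i)$ of $\mathcal{K}$-valued measures with $(\mu_i,|\mu_i|)\rightharpoonup^*(\mu,\nu)$. Then every $\nu\in\mathcal{V}_c(\mu)$ satisfies $\nu\ge|\mu|$ (as measures, i.e. $\nu(B)\ge|\mu|(B)$ for every Borel set $B$). -/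
open MeasureTheory

/-- Integral of a real function against a signed measure (via Jordan decomposition). -/
noncomputable def sInt (σ : SignedMeasure ℝ) (ψ : ℝ → ℝ) : ℝ :=
  (∫ t, ψ t ∂σ.toJordanDecomposition.posPart) - ∫ t, ψ t ∂σ.toJordanDecomposition.negPart

/-- Total variation measure of an `ℝ^m`-valued measure, for the norm `‖w‖ = ∑ j |w j|`:
the sum of the total variations of the components. -/
noncomputable def vtv {m : ℕ} (μ : Fin m → SignedMeasure ℝ) : Measure ℝ :=
  ∑ j, (μ j).totalVariation

/-- The set of non-atoms of the vector measure `μ`. -/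
def contSet {m : ℕ} (μ : Fin m → SignedMeasure ℝ) : Set ℝ :=
  {t | ∀ j, (μ j).totalVariation {t} = 0}

/-- `|μ^c|`: the total variation measure of the continuous part of `μ`. -/
noncomputable def vContTV {m : ℕ} (μ : Fin m → SignedMeasure ℝ) : Measure ℝ :=
  ∑ j, SignedMeasure.totalVariation ((μ j).restrict (contSet μ))

/-- The continuous (non-atomic) part of a nonnegative measure. -/
noncomputable def contPartM (ν : Measure ℝ) : Measure ℝ :=
  ν.restrict {t | ν {t} = 0}

/-- The vector measure `μ` takes values in the set `K`. -/
def KValued {m : ℕ} (K : Set (Fin m → ℝ)) (μ : Fin m → SignedMeasure ℝ) : Prop :=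
  ∀ B : Set ℝ, MeasurableSet B → (fun j => μ j B) ∈ K

/-- Weak-* convergence `(μᵢ, |μᵢ|) ⇀* (μ, ν)`, tested against continuous functions. -/
def WeakStarTo {m : ℕ} (μi : ℕ → Fin m → SignedMeasure ℝ)
    (μ : Fin m → SignedMeasure ℝ) (ν : Measure ℝ) : Prop :=
  ∀ ψ : ℝ → ℝ, Continuous ψ →
    (∀ j, Filter.Tendsto (fun i => sInt (μi i j) ψ) Filter.atTop (nhds (sInt (μ j) ψ))) ∧
    Filter.Tendsto (fun i => ∫ t, ψ t ∂(vtv (μi i))) Filter.atTop (nhds (∫ t, ψ t ∂ν))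


open Filter
open scoped BoundedContinuousFunction NNReal ENNReal

instance tv_fin (σ : SignedMeasure ℝ) : IsFiniteMeasure σ.totalVariation := by
  unfold SignedMeasure.totalVariation; infer_instance

lemma key_dual (σ : SignedMeasure ℝ) (f : ℝ →ᵇ ℝ) {ε : ℝ} (hε : 0 < ε) :
    ∃ h : ℝ →ᵇ ℝ, (∀ t, |h t| ≤ 1) ∧
      ∫ t, f t ∂σ.totalVariation ≤ sInt σ (fun t => f t * h t) + ε := by
  classical
  set p := σ.toJordanDecomposition.posPart with hp
  set n := σ.toJordanDecomposition.negPart with hn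
  obtain ⟨S, hSm, hpS, hnS⟩ := σ.toJordanDecomposition.mutuallySingular
  set C : ℝ := ‖f‖ + 1 with hC
  have hCpos : 0 < C := by positivity
  have hfC : ∀ t, |f t| ≤ C := fun t => by
    have := f.norm_coe_le_norm t
    rw [Real.norm_eq_abs] at this; linarith
  set g0 : ℝ → ℝ := fun t => if t ∈ S then (-1 : ℝ) else 1 with hg0
  have hg0m : Measurable g0 := Measurable.ite hSm measurable_const measurable_const
  have hg0b : ∀ t, |g0 t| ≤ 1 := fun t => by by_cases h : t ∈ S <;> simp [hg0, h]
  have hg0i : Integrable g0 (p + n) := by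
    refine ⟨hg0m.aestronglyMeasurable,
      HasFiniteIntegral.of_bounded (C := 1) (ae_of_all _ fun t => ?_)⟩
    rw [Real.norm_eq_abs]; exact hg0b t
  obtain ⟨g, -, hgint, hgc, hgi⟩ :=
    hg0i.exists_hasCompactSupport_integral_sub_le (ε := ε / C) (by positivity)
  set h0 : ℝ → ℝ := fun t => max (-1) (min 1 (g t)) with hh0
  have hh0c : Continuous h0 := continuous_const.max (continuous_const.min hgc)
  have hh0b : ∀ t, |h0 t| ≤ 1 := fun t => by
    rw [abs_le]
    constructor
    · exact le_max_left _ _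
    · exact max_le (by norm_num) (min_le_left _ _)
  have hg0fix : ∀ t, g0 t = max (-1) (min 1 (g0 t)) := fun t => by
    by_cases h : t ∈ S <;> simp [hg0, h] <;> norm_num
  have hclose : ∀ t, |h0 t - g0 t| ≤ |g t - g0 t| := fun t => by
    calc |h0 t - g0 t| = |max (-1) (min 1 (g t)) - max (-1) (min 1 (g0 t))| := by
          rw [← hg0fix t]
      _ ≤ max |(-1 : ℝ) - (-1)| |min 1 (g t) - min 1 (g0 t)| :=
          abs_max_sub_max_le_max _ _ _ _
      _ ≤ |g t - g0 t| := by
          refine max_le (by norm_num) ?_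
          calc |min 1 (g t) - min 1 (g0 t)| ≤ max |(1:ℝ) - 1| |g t - g0 t| :=
                abs_min_sub_min_le_max _ _ _ _
            _ ≤ |g t - g0 t| := max_le (by norm_num) le_rfl
  set H : ℝ →ᵇ ℝ := BoundedContinuousFunction.ofNormedAddCommGroup h0 hh0c 1
    (fun t => by rw [Real.norm_eq_abs]; exact hh0b t) with hH
  refine ⟨H, fun t => hh0b t, ?_⟩
  have hfH : (fun t => f t * H t) = fun t => (f * H) t := rfl
  -- integrabilities
  have hfp : Integrable (fun t => (f t : ℝ)) p := f.integrable p
  have hfn : Integrable (fun t => (f t : ℝ)) n := f.integrable n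
  have hfHp : Integrable (fun t => f t * h0 t) p := (f * H).integrable p
  have hfHn : Integrable (fun t => f t * h0 t) n := (f * H).integrable n
  have hgg0p : Integrable (fun t => C * |g0 t - g t|) p :=
    (((hg0i.left_of_add_measure).sub (hgi.left_of_add_measure)).abs.const_mul C)
  have hgg0n : Integrable (fun t => C * |g0 t - g t|) n :=
    (((hg0i.right_of_add_measure).sub (hgi.right_of_add_measure)).abs.const_mul C)
  have hbnd : ∀ t, ∀ s : ℝ, |s| ≤ |g0 t - g t| → f t * s ≤ C * |g0 t - g t| := by
    intro t s hs
    calc f t * s ≤ |f t * s| := le_abs_self _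
      _ = |f t| * |s| := abs_mul _ _
      _ ≤ C * |g0 t - g t| :=
        mul_le_mul (hfC t) hs (abs_nonneg _) hCpos.le
  -- part A
  have hApt : Integrable (fun t => f t * (g0 t - h0 t)) p := by
    refine ⟨(f.continuous.measurable.mul (hg0m.sub hh0c.measurable)).aestronglyMeasurable,
      HasFiniteIntegral.of_bounded (C := C * 2) (ae_of_all _ fun t => ?_)⟩
    rw [Real.norm_eq_abs, abs_mul]
    have h1 : |g0 t - h0 t| ≤ 2 := by
      obtain ⟨a1, a2⟩ := abs_le.mp (hg0b t)
      obtain ⟨b1, b2⟩ := abs_le.mp (hh0b t)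
      rw [abs_le]; constructor <;> linarith
    exact mul_le_mul (hfC t) h1 (abs_nonneg _) hCpos.le
  have hBpt : Integrable (fun t => f t * (h0 t - g0 t)) n := by
    refine ⟨(f.continuous.measurable.mul (hh0c.measurable.sub hg0m)).aestronglyMeasurable,
      HasFiniteIntegral.of_bounded (C := C * 2) (ae_of_all _ fun t => ?_)⟩
    rw [Real.norm_eq_abs, abs_mul]
    have h1 : |h0 t - g0 t| ≤ 2 := by
      obtain ⟨a1, a2⟩ := abs_le.mp (hg0b t)
      obtain ⟨b1, b2⟩ := abs_le.mp (hh0b t)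
      rw [abs_le]; constructor <;> linarith
    exact mul_le_mul (hfC t) h1 (abs_nonneg _) hCpos.le
  have dA : ∫ t, f t ∂p - ∫ t, f t * h0 t ∂p = ∫ t, f t * (g0 t - h0 t) ∂p := by
    rw [← integral_sub hfp hfHp]
    apply integral_congr_ae
    have hp1 : ∀ᵐ t ∂p, t ∉ S := measure_eq_zero_iff_ae_notMem.mp hpS
    filter_upwards [hp1] with t ht
    simp only [hg0, if_neg ht]; ring
  have dB : ∫ t, f t ∂n + ∫ t, f t * h0 t ∂n = ∫ t, f t * (h0 t - g0 t) ∂n := by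
    rw [← integral_add hfn hfHn]
    apply integral_congr_ae
    have hn1 : ∀ᵐ t ∂n, t ∈ S := by
      filter_upwards [measure_eq_zero_iff_ae_notMem.mp hnS] with t ht
      simpa using ht
    filter_upwards [hn1] with t ht
    simp only [hg0, if_pos ht]; ring
  have bA : ∫ t, f t * (g0 t - h0 t) ∂p ≤ ∫ t, C * |g0 t - g t| ∂p := by
    refine integral_mono hApt hgg0p fun t => hbnd t _ ?_
    calc |g0 t - h0 t| = |h0 t - g0 t| := abs_sub_comm _ _
      _ ≤ |g t - g0 t| := hclose t
      _ = |g0 t - g t| := abs_sub_comm _ _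
  have bB : ∫ t, f t * (h0 t - g0 t) ∂n ≤ ∫ t, C * |g0 t - g t| ∂n := by
    refine integral_mono hBpt hgg0n fun t => hbnd t _ ?_
    calc |h0 t - g0 t| ≤ |g t - g0 t| := hclose t
      _ = |g0 t - g t| := abs_sub_comm _ _
  have sumb : (∫ t, C * |g0 t - g t| ∂p) + ∫ t, C * |g0 t - g t| ∂n ≤ ε := by
    rw [← integral_add_measure hgg0p hgg0n, integral_const_mul]
    have : ∫ t, |g0 t - g t| ∂(p + n) ≤ ε / C := by
      have : (fun t => |g0 t - g t|) = fun t => ‖g0 t - g t‖ := by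
        funext t; rw [Real.norm_eq_abs]
      rw [this]; exact hgint
    calc C * ∫ t, |g0 t - g t| ∂(p + n) ≤ C * (ε / C) :=
          mul_le_mul_of_nonneg_left this hCpos.le
      _ = ε := by field_simp
  have tv : ∫ t, f t ∂σ.totalVariation = (∫ t, f t ∂p) + ∫ t, f t ∂n := by
    rw [show σ.totalVariation = p + n from rfl, integral_add_measure hfp hfn]
  have hsInt : sInt σ (fun t => f t * H t) =
      (∫ t, f t * h0 t ∂p) - ∫ t, f t * h0 t ∂n := rfl
  rw [tv, hsInt]
  linarith

lemma sInt_pair_le (σ : SignedMeasure ℝ) (f h : ℝ →ᵇ ℝ) (hf0 : ∀ t, 0 ≤ f t)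
    (hh : ∀ t, |h t| ≤ 1) :
    sInt σ (fun t => f t * h t) ≤ ∫ t, f t ∂σ.totalVariation := by
  set p := σ.toJordanDecomposition.posPart with hp
  set n := σ.toJordanDecomposition.negPart with hn
  have tv : ∫ t, f t ∂σ.totalVariation = (∫ t, f t ∂p) + ∫ t, f t ∂n := by
    rw [show σ.totalVariation = p + n from rfl, integral_add_measure (f.integrable p) (f.integrable n)]
  have hsInt : sInt σ (fun t => f t * h t) =
      (∫ t, f t * h t ∂p) - ∫ t, f t * h t ∂n := rfl
  have h1 : ∫ t, f t * h t ∂p ≤ ∫ t, f t ∂p := by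
    refine integral_mono ((f * h).integrable p) (f.integrable p) fun t => ?_
    have := abs_le.mp (hh t)
    nlinarith [hf0 t]
  have h2 : -(∫ t, f t ∂n) ≤ ∫ t, f t * h t ∂n := by
    rw [← integral_neg]
    refine integral_mono ((f.integrable n).neg) ((f * h).integrable n) fun t => ?_
    have := abs_le.mp (hh t)
    simp only [Pi.neg_apply]
    nlinarith [hf0 t]
  rw [tv, hsInt]
  linarith

instance vtv_finite {m : ℕ} (μ : Fin m → SignedMeasure ℝ) : IsFiniteMeasure (vtv μ) := by
  constructor
  rw [vtv, Measure.finset_sum_apply]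
  exact ENNReal.sum_lt_top.mpr fun j _ => measure_lt_top _ _

lemma main_int {m : ℕ} (μ : Fin m → SignedMeasure ℝ) (ν : Measure ℝ) [IsFiniteMeasure ν]
    (μi : ℕ → Fin m → SignedMeasure ℝ) (hws : WeakStarTo μi μ ν) (f : ℝ →ᵇ ℝ)
    (hf0 : ∀ t, 0 ≤ f t) : ∫ t, f t ∂(vtv μ) ≤ ∫ t, f t ∂ν := by
  refine le_of_forall_pos_le_add fun ε hε => ?_
  have hεm : (0:ℝ) < ε / (m + 1) := by positivity
  choose h hh1 hh2 using fun j : Fin m => key_dual (μ j) f hεm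
  have hsum : ∫ t, f t ∂(vtv μ) = ∑ j, ∫ t, f t ∂(μ j).totalVariation :=
    integral_finset_sum_measure fun j _ => f.integrable _
  set L := ∑ j, sInt (μ j) (fun t => f t * h j t) with hL
  have step1 : ∫ t, f t ∂(vtv μ) ≤ L + ε := by
    rw [hsum, hL]
    have : ∑ j, ∫ t, f t ∂(μ j).totalVariation ≤
        ∑ j, (sInt (μ j) (fun t => f t * h j t) + ε / (m + 1)) :=
      Finset.sum_le_sum fun j _ => hh2 j
    rw [Finset.sum_add_distrib] at this
    have hcard : (∑ _j : Fin m, ε / (m + 1)) ≤ ε := by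
      rw [Finset.sum_const, Finset.card_univ, Fintype.card_fin, nsmul_eq_mul]
      have h0 : (0:ℝ) < (m:ℝ) + 1 := by positivity
      rw [mul_comm, div_mul_eq_mul_div, div_le_iff₀ h0]
      nlinarith
    linarith
  have hTend : Tendsto (fun i => ∑ j, sInt (μi i j) (fun t => f t * h j t)) atTop (nhds L) :=
    tendsto_finset_sum _ fun j _ =>
      (hws (fun t => f t * h j t) (f.continuous.mul (h j).continuous)).1 j
  have hTend2 : Tendsto (fun i => ∫ t, f t ∂(vtv (μi i))) atTop (nhds (∫ t, f t ∂ν)) :=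
    (hws f f.continuous).2
  have hle : ∀ i, (∑ j, sInt (μi i j) (fun t => f t * h j t)) ≤ ∫ t, f t ∂(vtv (μi i)) := by
    intro i
    rw [show ∫ t, f t ∂(vtv (μi i)) = ∑ j, ∫ t, f t ∂(μi i j).totalVariation from
      integral_finset_sum_measure fun j _ => f.integrable _]
    exact Finset.sum_le_sum fun j _ => sInt_pair_le _ f (h j) hf0 (hh1 j)
  have : L ≤ ∫ t, f t ∂ν := le_of_tendsto_of_tendsto' hTend hTend2 hle
  linarith

lemma main_lint {m : ℕ} (μ : Fin m → SignedMeasure ℝ) (ν : Measure ℝ) [IsFiniteMeasure ν]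
    (μi : ℕ → Fin m → SignedMeasure ℝ) (hws : WeakStarTo μi μ ν) (f : ℝ →ᵇ ℝ≥0) :
    ∫⁻ t, f t ∂(vtv μ) ≤ ∫⁻ t, f t ∂ν := by
  obtain ⟨Cd, hCd⟩ := f.bounded
  set fR : ℝ →ᵇ ℝ := BoundedContinuousFunction.ofNormedAddCommGroup (fun t => (f t : ℝ))
    (NNReal.continuous_coe.comp f.continuous) ((f 0 : ℝ) + Cd) (fun t => by
      have := hCd t 0
      rw [NNReal.dist_eq, abs_le] at this
      rw [Real.norm_eq_abs, abs_of_nonneg (f t).coe_nonneg]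
      linarith) with hfR
  have hint1 : Integrable (fun t => ((f t : ℝ≥0) : ℝ)) (vtv μ) := fR.integrable _
  have hint2 : Integrable (fun t => ((f t : ℝ≥0) : ℝ)) ν := fR.integrable _
  rw [lintegral_coe_eq_integral _ hint1, lintegral_coe_eq_integral _ hint2]
  exact ENNReal.ofReal_le_ofReal
    (main_int μ ν μi hws fR fun t => (f t).coe_nonneg)

lemma closed_le {m : ℕ} (μ : Fin m → SignedMeasure ℝ) (ν : Measure ℝ) [IsFiniteMeasure ν]
    (μi : ℕ → Fin m → SignedMeasure ℝ) (hws : WeakStarTo μi μ ν)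
    {F : Set ℝ} (hF : IsClosed F) : vtv μ F ≤ ν F := by
  have h3 := HasOuterApproxClosed.tendsto_lintegral_apprSeq hF ν
  refine ge_of_tendsto h3 (Filter.Eventually.of_forall fun nn => ?_)
  exact le_trans (HasOuterApproxClosed.measure_le_lintegral hF (vtv μ) nn)
    (main_lint μ ν μi hws (hF.apprSeq nn))

/-- any `ν ∈ 𝒱_c(μ)` satisfies `ν ≥ |μ|`. -/
theorem stmt_3 (m : ℕ) (T : ℝ) (hT : 0 < T)
    (K : Set (Fin m → ℝ)) (hKc : IsClosed K)
    (hcone : ∀ c : ℝ, 0 ≤ c → ∀ w ∈ K, c • w ∈ K)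
    (μ : Fin m → SignedMeasure ℝ)
    (hμK : KValued K μ) (hμsupp : vtv μ (Set.Icc 0 T)ᶜ = 0)
    (ν : Measure ℝ) [IsFiniteMeasure ν] (hνsupp : ν (Set.Icc 0 T)ᶜ = 0)
    (hνc : contPartM ν = vContTV μ)
    (μi : ℕ → Fin m → SignedMeasure ℝ)
    (hμiK : ∀ i, KValued K (μi i))
    (hμisupp : ∀ i, vtv (μi i) (Set.Icc 0 T)ᶜ = 0)
    (hws : WeakStarTo μi μ ν) :
    ∀ B : Set ℝ, MeasurableSet B → vtv μ B ≤ ν B := by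
  intro B hB
  refine le_of_forall_lt fun r hr => ?_
  obtain ⟨F, hFB, hFc, hrF⟩ := hB.exists_lt_isClosed_of_ne_top (measure_ne_top _ _) hr
  exact lt_of_lt_of_le hrF ((closed_le μ ν μi hws hFc).trans (measure_mono hFB))
end

section
/- Let $\varphi_0:[0,S]\to[0,h]$ be increasing, surjective and 1-Lipschitz. Then there exists a sequence of strictly increasing, absolutely continuous, surjective functions $\sigma_i:[0,h]\to[0,S]$ whose inverses $\varphi_{0_i}$ are strictly increasing and 1-Lipschitz, such that $\varphi_{0_i}\to\varphi_0$ uniformly on $[0,S]$ and $\sigma_i(r)\to\sigma(r)$ at every continuity point $r$ of the right inverse $\sigma$ of $\varphi_0$. -/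
/-!
Mix `φ0` with its chord: `φ_e = (1 - e) φ0 + e (h / S) id` on `[0, S]`, continued with slope `1`
outside. Its difference quotients lie in `[e h / S, 1]`, so `φ_e` is a strictly increasing
1-Lipschitz bijection of `ℝ` whose inverse `σ_e` is `S / (e h)`-Lipschitz, hence absolutely
continuous and the integral of its derivative. Since `|φ_e - φ0| ≤ e h` on `[0, S]`, `φ_e → φ0`
uniformly and `φ0 (σ_e r) → r`. Once `ρ < φ0 (σ_e r) < ρ'`, the definition of `σ` as an infimum of
superlevel sets gives `σ ρ ≤ σ_e r ≤ σ ρ'`, so `σ_e r → σ r` wherever `σ` is continuous.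
-/

open MeasureTheory Set Filter Topology Function

def SlopesIn (k : ℝ) (g : ℝ → ℝ) : Prop :=
  ∀ s t, s ≤ t → k * (t - s) ≤ g t - g s ∧ g t - g s ≤ t - s

namespace SlopesIn

variable {k : ℝ} {g : ℝ → ℝ}

theorem strictMono (hk : 0 < k) (hg : SlopesIn k g) : StrictMono g := fun s t hst => by
  nlinarith [(hg s t hst.le).1, mul_pos hk (sub_pos.2 hst)]

theorem lipschitzWith_one (hk : 0 ≤ k) (hg : SlopesIn k g) : LipschitzWith 1 g := by
  refine LipschitzWith.of_le_add fun s t => ?_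
  rcases le_total s t with hst | hts
  · nlinarith [(hg s t hst).1, dist_nonneg (x := s) (y := t)]
  · linarith [(hg t s hts).2, Real.dist_eq s t, le_abs_self (s - t)]

theorem surjective (hk : 0 < k) (hg : SlopesIn k g) : Surjective g := by
  intro p
  set t := |p - g 0| / k
  have ht : 0 ≤ t := by positivity
  have hkt : k * t = |p - g 0| := mul_div_cancel₀ _ hk.ne'
  refine mem_range_of_exists_le_of_exists_ge (hg.lipschitzWith_one hk.le).continuous
    ⟨-t, ?_⟩ ⟨t, ?_⟩
  · linarith [(hg (-t) 0 (by linarith)).1, neg_abs_le (p - g 0)]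
  · linarith [(hg 0 t ht).1, le_abs_self (p - g 0)]

theorem antilipschitzWith (hk : 0 < k) (hg : SlopesIn k g) :
    AntilipschitzWith (k⁻¹).toNNReal g := by
  refine AntilipschitzWith.of_le_mul_dist fun s t => ?_
  rw [Real.coe_toNNReal _ (inv_nonneg.2 hk.le), ← div_eq_inv_mul, le_div_iff₀' hk]
  wlog hst : s ≤ t generalizing s t
  · rw [dist_comm, dist_comm (g s)]
    exact this t s (le_of_not_ge hst)
  rw [dist_comm, dist_comm (g s), Real.dist_eq, Real.dist_eq, abs_of_nonneg (sub_nonneg.2 hst)]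
  exact (hg s t hst).1.trans (le_abs_self _)

theorem invFun_eq (hk : 0 < k) (hg : SlopesIn k g) {x y : ℝ} (hxy : g x = y) : invFun g y = x :=
  hxy ▸ leftInverse_invFun (hg.strictMono hk).injective x

theorem apply_invFun (hk : 0 < k) (hg : SlopesIn k g) (y : ℝ) : g (invFun g y) = y :=
  rightInverse_invFun (hg.surjective hk) y

theorem strictMono_invFun (hk : 0 < k) (hg : SlopesIn k g) : StrictMono (invFun g) :=
  fun a b hab => by
    rwa [← (hg.strictMono hk).lt_iff_lt, hg.apply_invFun hk, hg.apply_invFun hk]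

theorem lipschitzWith_invFun (hk : 0 < k) (hg : SlopesIn k g) :
    LipschitzWith (k⁻¹).toNNReal (invFun g) :=
  (hg.antilipschitzWith hk).to_rightInverse (rightInverse_invFun (hg.surjective hk))

theorem absolutelyContinuousOnInterval_invFun (hk : 0 < k) (hg : SlopesIn k g) (a b : ℝ) :
    AbsolutelyContinuousOnInterval (invFun g) a b :=
  (hg.lipschitzWith_invFun hk).lipschitzOnWith.absolutelyContinuousOnInterval

theorem mapsTo_invFun (hk : 0 < k) (hg : SlopesIn k g) {a b c d : ℝ} (ha : g a = c)
    (hb : g b = d) : MapsTo (invFun g) (Icc c d) (Icc a b) := by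
  simpa only [hg.invFun_eq hk ha, hg.invFun_eq hk hb] using
    (hg.strictMono_invFun hk).monotone.mapsTo_Icc (a := c) (b := d)

theorem surjOn_invFun (hk : 0 < k) (hg : SlopesIn k g) {a b c d : ℝ} (ha : g a = c)
    (hb : g b = d) : SurjOn (invFun g) (Icc c d) (Icc a b) := fun x hx =>
  ⟨g x, by simpa only [ha, hb] using (hg.strictMono hk).monotone.mapsTo_Icc hx,
    hg.invFun_eq hk rfl⟩

theorem convexComb_linear (hg : SlopesIn 0 g) {e c : ℝ} (he₀ : 0 ≤ e) (he₁ : e ≤ 1) (hc : c ≤ 1) :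
    SlopesIn (e * c) (fun s => (1 - e) * g s + e * c * s) := fun s t hst => by
  obtain ⟨hg₀, hg₁⟩ := hg s t hst
  constructor
  · nlinarith
  · nlinarith [mul_le_mul_of_nonneg_left hc (mul_nonneg he₀ (sub_nonneg.2 hst))]

end SlopesIn

noncomputable def extendSlopeOne (a b : ℝ) (f : ℝ → ℝ) (s : ℝ) : ℝ :=
  f (max a (min s b)) + (s - max a (min s b))

theorem extendSlopeOne_of_mem {a b : ℝ} {f : ℝ → ℝ} {s : ℝ} (hs : s ∈ Icc a b) :
    extendSlopeOne a b f s = f s := by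
  simp [extendSlopeOne, min_eq_left hs.2, max_eq_right hs.1]

theorem slopesIn_extendSlopeOne {a b : ℝ} {f : ℝ → ℝ} (hab : a ≤ b)
    (hmono : MonotoneOn f (Icc a b)) (hlip : LipschitzOnWith 1 f (Icc a b)) :
    SlopesIn 0 (extendSlopeOne a b f) := by
  intro s t hst
  have hmem : ∀ x, max a (min x b) ∈ Icc a b := fun x =>
    ⟨le_max_left _ _, max_le hab (min_le_right _ _)⟩
  have hclamp : 0 ≤ max a (min t b) - max a (min s b) ∧
      max a (min t b) - max a (min s b) ≤ t - s := by
    simp only [max_def, min_def]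
    constructor <;> split_ifs <;> linarith
  have hf₀ := hmono (hmem s) (hmem t) (by linarith)
  have hf₁ := hlip.dist_le_mul _ (hmem t) _ (hmem s)
  rw [NNReal.coe_one, one_mul, Real.dist_eq, Real.dist_eq, abs_of_nonneg (by linarith),
    abs_of_nonneg (by linarith)] at hf₁
  simp only [extendSlopeOne]
  constructor <;> linarith

noncomputable def mixWithChord (S h e : ℝ) (φ : ℝ → ℝ) (s : ℝ) : ℝ :=
  (1 - e) * extendSlopeOne 0 S φ s + e * (h / S) * s

section MixWithChord

variable {S h e : ℝ} {φ : ℝ → ℝ}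

theorem mixWithChord_of_mem {s : ℝ} (hs : s ∈ Icc 0 S) :
    mixWithChord S h e φ s = (1 - e) * φ s + e * (h / S) * s := by
  rw [mixWithChord, extendSlopeOne_of_mem hs]

theorem mixWithChord_zero (hS : 0 ≤ S) (hφ : φ 0 = 0) : mixWithChord S h e φ 0 = 0 := by
  simp [mixWithChord_of_mem (left_mem_Icc.2 hS), hφ]

theorem mixWithChord_self (hS : 0 < S) (hφ : φ S = h) : mixWithChord S h e φ S = h := by
  rw [mixWithChord_of_mem (right_mem_Icc.2 hS.le), hφ, mul_assoc, div_mul_cancel₀ _ hS.ne']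
  ring

theorem slopesIn_mixWithChord (hS : 0 < S) (hhS : h ≤ S) (hmono : MonotoneOn φ (Icc 0 S))
    (hlip : LipschitzOnWith 1 φ (Icc 0 S)) (he₀ : 0 ≤ e) (he₁ : e ≤ 1) :
    SlopesIn (e * (h / S)) (mixWithChord S h e φ) :=
  (slopesIn_extendSlopeOne hS.le hmono hlip).convexComb_linear he₀ he₁ ((div_le_one hS).2 hhS)

theorem abs_mixWithChord_sub_le (hS : 0 < S) (hφ : MapsTo φ (Icc 0 S) (Icc 0 h)) (he : 0 ≤ e)
    {s : ℝ} (hs : s ∈ Icc 0 S) : |mixWithChord S h e φ s - φ s| ≤ e * h := by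
  have hchord : h / S * s ∈ Icc 0 h := by
    have h₀ : 0 ≤ h := (hφ hs).1.trans (hφ hs).2
    refine ⟨by have := hs.1; positivity, ?_⟩
    rw [div_mul_eq_mul_div, div_le_iff₀ hS]
    exact mul_le_mul_of_nonneg_left hs.2 h₀
  rw [mixWithChord_of_mem hs, show (1 - e) * φ s + e * (h / S) * s - φ s
      = e * (h / S * s - φ s) by ring, abs_mul, abs_of_nonneg he]
  exact mul_le_mul_of_nonneg_left
    (abs_sub_le_iff.2 ⟨by linarith [hchord.2, (hφ hs).1], by linarith [hchord.1, (hφ hs).2]⟩) he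

theorem tendstoUniformlyOn_mixWithChord {ι : Type*} {l : Filter ι} {e : ι → ℝ} (hS : 0 < S)
    (hφ : MapsTo φ (Icc 0 S) (Icc 0 h)) (he₀ : ∀ i, 0 ≤ e i) (he : Tendsto e l (𝓝 0)) :
    TendstoUniformlyOn (fun i => mixWithChord S h (e i) φ) φ l (Icc 0 S) := by
  rw [Metric.tendstoUniformlyOn_iff]
  intro ε hε
  have heh : Tendsto (fun i => e i * h) l (𝓝 0) := by simpa using he.mul_const h
  filter_upwards [heh.eventually (gt_mem_nhds hε)] with i hi s hs
  rw [dist_comm, Real.dist_eq]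
  exact (abs_mixWithChord_sub_le hS hφ (he₀ i) hs).trans_lt hi

end MixWithChord

theorem TendstoUniformlyOn.tendsto_of_apply_eq {ι α β : Type*} [PseudoMetricSpace β]
    {l : Filter ι} {F : ι → α → β} {f : α → β} {s : Set α} (hF : TendstoUniformlyOn F f l s)
    {x : ι → α} {y : β} (hx : ∀ i, x i ∈ s) (hFx : ∀ i, F i (x i) = y) :
    Tendsto (fun i => f (x i)) l (𝓝 y) :=
  Metric.tendsto_nhds.2 fun ε hε => (Metric.tendstoUniformlyOn_iff.1 hF ε hε).mono
    fun i hi => by simpa only [hFx] using hi (x i) (hx i)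

theorem tendsto_of_tendsto_comp_of_eq_sInf {ι : Type*} {l : Filter ι} {φ σ : ℝ → ℝ}
    {a b c d r : ℝ} {u : ι → ℝ} (hab : a ≤ b) (hmono : MonotoneOn φ (Icc a b)) (hφb : d ≤ φ b)
    (hσ : ∀ ρ ∈ Ioo c d, σ ρ = sInf {s | s ∈ Icc a b ∧ ρ < φ s}) (hr : r ∈ Ioo c d)
    (hcont : ContinuousAt σ r) (hu : ∀ i, u i ∈ Icc a b)
    (hφu : Tendsto (fun i => φ (u i)) l (𝓝 r)) : Tendsto u l (𝓝 (σ r)) := by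
  refine tendsto_order.2 ⟨fun y hy => ?_, fun y hy => ?_⟩
  · obtain ⟨ρ, hyρ, hρ⟩ := ((hcont.tendsto.mono_left nhdsWithin_le_nhds).eventually
      (lt_mem_nhds hy) |>.and (Ioo_mem_nhdsLT hr.1)).exists
    rw [hσ ρ ⟨hρ.1, hρ.2.trans hr.2⟩] at hyρ
    filter_upwards [hφu.eventually (lt_mem_nhds hρ.2)] with i hi
    exact hyρ.trans_le (csInf_le ⟨a, fun _ hs => hs.1.1⟩ ⟨hu i, hi⟩)
  · obtain ⟨ρ, hyρ, hρ⟩ := ((hcont.tendsto.mono_left nhdsWithin_le_nhds).eventually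
      (gt_mem_nhds hy) |>.and (Ioo_mem_nhdsGT hr.2)).exists
    rw [hσ ρ ⟨hr.1.trans hρ.1, hρ.2⟩] at hyρ
    filter_upwards [hφu.eventually (gt_mem_nhds hρ.1)] with i hi
    refine lt_of_le_of_lt ?_ hyρ
    refine le_csInf ⟨b, right_mem_Icc.2 hab, hρ.2.trans_le hφb⟩ fun s ⟨hs, hρs⟩ => ?_
    by_contra! hsu
    exact (hi.trans hρs).not_ge (hmono hs (hu i) hsu.le)

theorem stmt_14_general (h S : ℝ) (hh : 0 < h) (hS : 0 < S)
    (φ0 : ℝ → ℝ)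
    (hmono : MonotoneOn φ0 (Set.Icc 0 S))
    (hlip : LipschitzOnWith 1 φ0 (Set.Icc 0 S))
    (hφ00 : φ0 0 = 0) (hφ0S : φ0 S = h)
    (σ : ℝ → ℝ) (hσ0 : σ 0 = 0) (hσh : σ h = S)
    (hσ : ∀ r ∈ Set.Ioo 0 h, σ r = sInf {s | s ∈ Set.Icc 0 S ∧ r < φ0 s}) :
    ∃ σi φ0i : ℕ → ℝ → ℝ, ∃ gi : ℕ → ℝ → ℝ,
      (∀ i, StrictMonoOn (σi i) (Set.Icc 0 h)) ∧
      (∀ i, σi i 0 = 0 ∧ σi i h = S) ∧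
      (∀ i, IntegrableOn (gi i) (Set.Icc 0 h)) ∧
      (∀ i, ∀ r ∈ Set.Icc 0 h, σi i r = ∫ t in (0:ℝ)..r, gi i t) ∧
      (∀ i, Set.SurjOn (σi i) (Set.Icc 0 h) (Set.Icc 0 S)) ∧
      (∀ i, StrictMonoOn (φ0i i) (Set.Icc 0 S)) ∧
      (∀ i, LipschitzOnWith 1 (φ0i i) (Set.Icc 0 S)) ∧
      (∀ i, ∀ r ∈ Set.Icc 0 h, φ0i i (σi i r) = r) ∧
      (∀ i, ∀ s ∈ Set.Icc 0 S, σi i (φ0i i s) = s) ∧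
      TendstoUniformlyOn (fun i => φ0i i) φ0 Filter.atTop (Set.Icc 0 S) ∧
      (∀ r ∈ Set.Icc 0 h, ContinuousWithinAt σ (Set.Icc 0 h) r →
        Filter.Tendsto (fun i => σi i r) Filter.atTop (nhds (σ r))) := by
  have hhS : h ≤ S := by
    simpa [hφ00, hφ0S, abs_of_pos hh, abs_of_pos hS] using
      hlip.dist_le_mul S (right_mem_Icc.2 hS.le) 0 (left_mem_Icc.2 hS.le)
  have hφ : MapsTo φ0 (Icc 0 S) (Icc 0 h) := by
    simpa only [hφ00, hφ0S] using hmono.mapsTo_Icc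
  set e : ℕ → ℝ := fun i => 1 / ((i : ℝ) + 1)
  have he₀ : ∀ i, 0 < e i := fun i => by positivity
  have hk : ∀ i, 0 < e i * (h / S) := fun i => mul_pos (he₀ i) (div_pos hh hS)
  set φi := fun i => mixWithChord S h (e i) φ0
  have hslope : ∀ i, SlopesIn (e i * (h / S)) (φi i) := fun i =>
    slopesIn_mixWithChord hS hhS hmono hlip (he₀ i).le (div_le_one_of_le₀ (by simp) (by positivity))
  have hφi0 : ∀ i, φi i 0 = 0 := fun i => mixWithChord_zero hS.le hφ00
  have hφiS : ∀ i, φi i S = h := fun i => mixWithChord_self hS hφ0S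
  have hφi : TendstoUniformlyOn φi φ0 atTop (Icc 0 S) :=
    tendstoUniformlyOn_mixWithChord hS hφ (fun i => (he₀ i).le)
      tendsto_one_div_add_atTop_nhds_zero_nat
  have hσi0 : ∀ i, invFun (φi i) 0 = 0 := fun i => (hslope i).invFun_eq (hk i) (hφi0 i)
  have hσih : ∀ i, invFun (φi i) h = S := fun i => (hslope i).invFun_eq (hk i) (hφiS i)
  refine ⟨fun i => invFun (φi i), φi, fun i => deriv (invFun (φi i)),
    fun i => ((hslope i).strictMono_invFun (hk i)).strictMonoOn _, fun i => ⟨hσi0 i, hσih i⟩,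
    fun i => (intervalIntegrable_iff_integrableOn_Icc_of_le hh.le).1
      ((hslope i).absolutelyContinuousOnInterval_invFun (hk i) 0 h).intervalIntegrable_deriv,
    fun i r _ => ?_, fun i => (hslope i).surjOn_invFun (hk i) (hφi0 i) (hφiS i),
    fun i => ((hslope i).strictMono (hk i)).strictMonoOn _,
    fun i => ((hslope i).lipschitzWith_one (hk i).le).lipschitzOnWith,
    fun i r _ => (hslope i).apply_invFun (hk i) r, fun i s _ => (hslope i).invFun_eq (hk i) rfl,
    hφi, fun r hr hcont => ?_⟩
  · rw [((hslope i).absolutelyContinuousOnInterval_invFun (hk i) 0 r).integral_deriv_eq_sub,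
      hσi0, sub_zero]
  rcases hr.1.eq_or_lt with rfl | hr₀
  · simp only [hσi0, hσ0, tendsto_const_nhds]
  rcases hr.2.eq_or_lt with rfl | hrh
  · simp only [hσih, hσh, tendsto_const_nhds]
  have hσimem : ∀ i, invFun (φi i) r ∈ Icc 0 S := fun i =>
    (hslope i).mapsTo_invFun (hk i) (hφi0 i) (hφiS i) hr
  exact tendsto_of_tendsto_comp_of_eq_sInf hS.le hmono hφ0S.ge hσ ⟨hr₀, hrh⟩
    (hcont.continuousAt (Icc_mem_nhds hr₀ hrh)) hσimem
    (hφi.tendsto_of_apply_eq hσimem fun i => (hslope i).apply_invFun (hk i) r)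

/-- every increasing, surjective, 1-Lipschitz `φ0 : [0,S] → [0,h]` is the
uniform limit of strictly increasing 1-Lipschitz functions `φ0ᵢ` whose (absolutely
continuous, strictly increasing, surjective) inverses `σᵢ` converge pointwise to the
right inverse `σ` of `φ0` at every continuity point of `σ`. -/
theorem stmt_14 (h S : ℝ) (hh : 0 < h) (hS : 0 < S)
    (φ0 : ℝ → ℝ)
    (hmono : MonotoneOn φ0 (Set.Icc 0 S))
    (hlip : LipschitzOnWith 1 φ0 (Set.Icc 0 S))
    (hsurj : Set.SurjOn φ0 (Set.Icc 0 S) (Set.Icc 0 h))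
    (hφ00 : φ0 0 = 0) (hφ0S : φ0 S = h)
    (σ : ℝ → ℝ) (hσ0 : σ 0 = 0) (hσh : σ h = S)
    (hσ : ∀ r ∈ Set.Ioo 0 h, σ r = sInf {s | s ∈ Set.Icc 0 S ∧ r < φ0 s}) :
    ∃ σi φ0i : ℕ → ℝ → ℝ, ∃ gi : ℕ → ℝ → ℝ,
      (∀ i, StrictMonoOn (σi i) (Set.Icc 0 h)) ∧
      (∀ i, σi i 0 = 0 ∧ σi i h = S) ∧
      (∀ i, IntegrableOn (gi i) (Set.Icc 0 h)) ∧
      (∀ i, ∀ r ∈ Set.Icc 0 h, σi i r = ∫ t in (0:ℝ)..r, gi i t) ∧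
      (∀ i, Set.SurjOn (σi i) (Set.Icc 0 h) (Set.Icc 0 S)) ∧
      (∀ i, StrictMonoOn (φ0i i) (Set.Icc 0 S)) ∧
      (∀ i, LipschitzOnWith 1 (φ0i i) (Set.Icc 0 S)) ∧
      (∀ i, ∀ r ∈ Set.Icc 0 h, φ0i i (σi i r) = r) ∧
      (∀ i, ∀ s ∈ Set.Icc 0 S, σi i (φ0i i s) = s) ∧
      TendstoUniformlyOn (fun i => φ0i i) φ0 Filter.atTop (Set.Icc 0 S) ∧
      (∀ r ∈ Set.Icc 0 h, ContinuousWithinAt σ (Set.Icc 0 h) r →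
        Filter.Tendsto (fun i => σi i r) Filter.atTop (nhds (σ r))) :=
  stmt_14_general h S hh hS φ0 hmono hlip hφ00 hφ0S σ hσ0 hσh hσ
end
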